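/- Suppose F : 2^ω → 2^ω is a function, I is a σ-ideal on 2^ω with cov(I) = 2^{ℵ₀}, and for each x ∈ 2^ω, J_x is a σ-ideal on F^{-1}(x) with cov(J_x) = 2^{ℵ₀} (in particular F is onto and each fiber is nonempty). Assume: (1) for every null set G ⊆ 2^ω, {z : ∃x, (G + z) ∩ F^{-1}(x) ∉ J_x} ∈ I; (2) for every null set G and every t ∈ 2^ω, {z : t ∈ G + z} ∈ I. Then, assuming CH (or just cov(N) = 2^{ℵ₀} with appropriate enumeration of null sets of size continuum), there exists a strongly meager set X ⊆ 2^ω with F''(X) = 2^ω. -/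
import Mathlib


open MeasureTheory
open scoped Pointwise ENNReal

open Classical in
noncomputable def stmt12RecAux {ι π : Type*} [Nonempty π] [LinearOrder ι] [WellFoundedLT ι]
    (Good : ∀ α : ι, (∀ β, β < α → π) → π → Prop) : ι → π :=
  IsWellFounded.fix (· < ·)
    (fun α q => if h : ∃ w, Good α q w then h.choose else Classical.arbitrary π)

theorem stmt12_exists_good_seq {ι π : Type*} [Nonempty π] [LinearOrder ι] [WellFoundedLT ι]
    (Good : ∀ α : ι, (∀ β, β < α → π) → π → Prop)
    (hex : ∀ (α : ι) (q : ∀ β, β < α → π),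
      (∀ β (h : β < α), Good β (fun γ (hγ : γ < β) => q γ (hγ.trans h)) (q β h)) →
      ∃ w, Good α q w) :
    ∃ f : ι → π, ∀ α, Good α (fun β _ => f β) (f α) := by
  refine ⟨stmt12RecAux Good, fun α => ?_⟩
  induction α using WellFoundedLT.induction with
  | ind α IH =>
    classical
    have hu : stmt12RecAux Good α =
        if h : ∃ w, Good α (fun β _ => stmt12RecAux Good β) w then h.choose
        else Classical.arbitrary π := by
      conv_lhs => rw [stmt12RecAux, IsWellFounded.fix_eq]
      congr
    have h : ∃ w, Good α (fun β _ => stmt12RecAux Good β) w :=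
      hex α _ (fun β hβ => IH β hβ)
    rw [hu, dif_pos h]
    exact h.choose_spec

theorem stmt12_char2 (a : ℕ → ZMod 2) : a + a = 0 := by
  funext i
  exact CharTwo.add_self_eq_zero (a i)

theorem stmt12_cancel (a b : ℕ → ZMod 2) : a + b + b = a := by
  rw [add_assoc, stmt12_char2, add_zero]

theorem stmt12_memadd (G : Set (ℕ → ZMod 2)) (z t : ℕ → ZMod 2) :
    t ∈ G + ({z} : Set (ℕ → ZMod 2)) ↔ t + z ∈ G := by
  rw [Set.add_singleton]
  constructor
  · rintro ⟨g, hg, rfl⟩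
    rwa [stmt12_cancel]
  · intro h
    exact ⟨t + z, h, stmt12_cancel t z⟩

theorem stmt12_memswap (G : Set (ℕ → ZMod 2)) (z t : ℕ → ZMod 2) :
    t ∈ G + ({z} : Set (ℕ → ZMod 2)) ↔ z ∈ G + ({t} : Set (ℕ → ZMod 2)) := by
  rw [stmt12_memadd, stmt12_memadd, add_comm]

theorem stmt12_mk_cont : Cardinal.mk (ℕ → ZMod 2) = Cardinal.continuum := by
  have h2 : Cardinal.mk (ZMod 2) = 2 := by
    rw [Cardinal.mk_fintype]
    simp
  rw [Cardinal.mk_arrow, Cardinal.lift_id, Cardinal.lift_id, h2, Cardinal.mk_nat,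
    Cardinal.two_power_aleph0]

theorem stmt12_mk_measurable :
    Cardinal.mk {t : Set (ℕ → ZMod 2) | MeasurableSet t} ≤ Cardinal.continuum := by
  have hpi := MeasurableSpace.pi_eq_generateFrom_projections
    (α := fun _ : ℕ => ZMod 2) (mα := fun _ => inferInstance)
  have hs : Cardinal.mk {B : Set (ℕ → ZMod 2) | ∃ (i : ℕ) (A : Set (ZMod 2)),
      MeasurableSet A ∧ Function.eval i ⁻¹' A = B} ≤ Cardinal.continuum := by
    have hsub : {B : Set (ℕ → ZMod 2) | ∃ (i : ℕ) (A : Set (ZMod 2)),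
        MeasurableSet A ∧ Function.eval i ⁻¹' A = B} ⊆
        Set.range (fun p : ℕ × Set (ZMod 2) => Function.eval p.1 ⁻¹' p.2) := by
      rintro B ⟨i, A, _, rfl⟩
      exact ⟨(i, A), rfl⟩
    refine le_trans (Cardinal.mk_le_mk_of_subset hsub) ?_
    refine le_trans Cardinal.mk_range_le ?_
    exact le_trans Cardinal.mk_le_aleph0 Cardinal.aleph0_le_continuum
  have key := MeasurableSpace.cardinal_measurableSet_le_continuum hs
  convert key using 3
  rw [hpi]

/-- The abstract construction lemma: if `F : 2^ω → 2^ω`, `I` is a σ-ideal on `2^ω`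
with `cov(I) = 𝔠`, for each `x` the family `J x` is a σ-ideal of subsets of the fiber
`F⁻¹(x)` with `cov(J x) = 𝔠`, the two translation conditions (1) and (2) hold for
null sets `G` (with respect to the uniform product measure `μ`), and `cov(N) = 𝔠`,
then there is a strongly meager set `X` with `F''(X) = 2^ω`. -/
theorem stmt12 (μ : Measure (ℕ → ZMod 2)) [IsProbabilityMeasure μ]
    (hμ : ∀ (s : Finset ℕ) (f : ℕ → ZMod 2),
      μ {x | ∀ i ∈ s, x i = f i} = (1 / 2 : ℝ≥0∞) ^ s.card)
    (F : (ℕ → ZMod 2) → (ℕ → ZMod 2))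
    (I : Set (Set (ℕ → ZMod 2)))
    (hIdown : ∀ A B : Set (ℕ → ZMod 2), A ⊆ B → B ∈ I → A ∈ I)
    (hIunion : ∀ f : ℕ → Set (ℕ → ZMod 2), (∀ n, f n ∈ I) → (⋃ n, f n) ∈ I)
    (hIcov : ∀ A : Set (Set (ℕ → ZMod 2)), A ⊆ I →
      Cardinal.mk A < Cardinal.continuum → ⋃₀ A ≠ Set.univ)
    (J : (ℕ → ZMod 2) → Set (Set (ℕ → ZMod 2)))
    (hJsub : ∀ x S, S ∈ J x → S ⊆ F ⁻¹' {x})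
    (hJdown : ∀ x, ∀ A B : Set (ℕ → ZMod 2), A ⊆ B → B ∈ J x → A ∈ J x)
    (hJunion : ∀ x, ∀ f : ℕ → Set (ℕ → ZMod 2), (∀ n, f n ∈ J x) → (⋃ n, f n) ∈ J x)
    (hJcov : ∀ x, ∀ A : Set (Set (ℕ → ZMod 2)), A ⊆ J x →
      Cardinal.mk A < Cardinal.continuum → ¬ (F ⁻¹' {x} ⊆ ⋃₀ A))
    (h1 : ∀ G : Set (ℕ → ZMod 2), μ G = 0 →
      {z | ∃ x, (G + ({z} : Set (ℕ → ZMod 2))) ∩ F ⁻¹' {x} ∉ J x} ∈ I)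
    (h2 : ∀ G : Set (ℕ → ZMod 2), μ G = 0 → ∀ t : ℕ → ZMod 2,
      {z | t ∈ G + ({z} : Set (ℕ → ZMod 2))} ∈ I)
    (hcovN : ∀ A : Set (Set (ℕ → ZMod 2)), (∀ G ∈ A, μ G = 0) →
      Cardinal.mk A < Cardinal.continuum → ⋃₀ A ≠ Set.univ) :
    ∃ X : Set (ℕ → ZMod 2),
      (∀ H : Set (ℕ → ZMod 2), μ H = 0 → X + H ≠ Set.univ) ∧ F '' X = Set.univ := by
  classical
  -- translates of null sets are in I
  have hItrans : ∀ G : Set (ℕ → ZMod 2), μ G = 0 → ∀ t : ℕ → ZMod 2,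
      G + ({t} : Set (ℕ → ZMod 2)) ∈ I := by
    intro G hG t
    have := h2 G hG t
    have heq : {z | t ∈ G + ({z} : Set (ℕ → ZMod 2))} = G + ({t} : Set (ℕ → ZMod 2)) := by
      ext w
      rw [Set.mem_setOf_eq, stmt12_memswap]
    rwa [heq] at this
  -- the enumeration of points
  obtain ⟨e, he⟩ : ∃ e : Cardinal.continuum.ord.ToType → (ℕ → ZMod 2),
      Function.Surjective e := by
    have : Nonempty (Cardinal.continuum.ord.ToType ≃ (ℕ → ZMod 2)) := by
      rw [← Cardinal.eq, Cardinal.mk_ord_toType, stmt12_mk_cont]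
    exact ⟨this.some, this.some.surjective⟩
  -- the enumeration of measurable null sets
  obtain ⟨g, hg0, hgsurj⟩ : ∃ g : Cardinal.continuum.ord.ToType → Set (ℕ → ZMod 2),
      (∀ α, μ (g α) = 0) ∧ ∀ S : Set (ℕ → ZMod 2), MeasurableSet S → μ S = 0 →
        ∃ α, g α = S := by
    have hle : Cardinal.mk {S : Set (ℕ → ZMod 2) | MeasurableSet S ∧ μ S = 0} ≤
        Cardinal.mk (Cardinal.continuum.ord.ToType) := by
      rw [Cardinal.mk_ord_toType]
      exact le_trans (Cardinal.mk_le_mk_of_subset (fun S hS => hS.1)) stmt12_mk_measurable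
    obtain ⟨emb⟩ := Cardinal.le_def _ _ |>.mp hle
    haveI : Nonempty {S : Set (ℕ → ZMod 2) | MeasurableSet S ∧ μ S = 0} :=
      ⟨⟨∅, MeasurableSet.empty, measure_empty⟩⟩
    refine ⟨fun α => (Function.invFun emb α : _), fun α => (Function.invFun emb α).2.2, ?_⟩
    intro S hSm hS0
    obtain ⟨α, hα⟩ := Function.invFun_surjective emb.injective ⟨S, hSm, hS0⟩
    exact ⟨α, by simp only [hα]⟩
  -- the recursion
  obtain ⟨f, hf⟩ := stmt12_exists_good_seq
    (ι := Cardinal.continuum.ord.ToType) (π := (ℕ → ZMod 2) × (ℕ → ZMod 2))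
    (fun α q tz =>
      (∀ x, ((g α + ({tz.1} : Set (ℕ → ZMod 2))) ∩ F ⁻¹' {x}) ∈ J x) ∧
      (∀ β (h : β < α), tz.1 ∉ g α + ({(q β h).2} : Set (ℕ → ZMod 2))) ∧
      F tz.2 = e α ∧ tz.2 ∉ g α + ({tz.1} : Set (ℕ → ZMod 2)) ∧
      ∀ β (h : β < α), tz.2 ∉ g β + ({(q β h).1} : Set (ℕ → ZMod 2)))
    (by
      intro α q hq
      -- choose t
      set A : Set (Set (ℕ → ZMod 2)) :=
        insert {z | ∃ x, (g α + ({z} : Set (ℕ → ZMod 2))) ∩ F ⁻¹' {x} ∉ J x}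
          (Set.range (fun β : ↥(Set.Iio α) =>
            g α + ({(q β.1 β.2).2} : Set (ℕ → ZMod 2)))) with hA
      have hAI : A ⊆ I := by
        rintro S hS
        rcases Set.mem_insert_iff.mp hS with rfl | ⟨β, rfl⟩
        · exact h1 (g α) (hg0 α)
        · exact hItrans (g α) (hg0 α) _
      have hAcard : Cardinal.mk A < Cardinal.continuum := by
        refine lt_of_le_of_lt Cardinal.mk_insert_le ?_
        refine Cardinal.add_lt_of_lt Cardinal.aleph0_le_continuum ?_ ?_
        · exact lt_of_le_of_lt Cardinal.mk_range_le (Cardinal.mk_Iio_ord_toType α)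
        · exact Cardinal.one_lt_aleph0.trans_le Cardinal.aleph0_le_continuum
      obtain ⟨t, ht⟩ := (Set.ne_univ_iff_exists_notMem _).mp (hIcov A hAI hAcard)
      have htGood : ∀ x, ((g α + ({t} : Set (ℕ → ZMod 2))) ∩ F ⁻¹' {x}) ∈ J x := by
        intro x
        by_contra hx
        exact ht ⟨_, Set.mem_insert _ _, ⟨x, hx⟩⟩
      have ht2 : ∀ β (h : β < α), t ∉ g α + ({(q β h).2} : Set (ℕ → ZMod 2)) := by
        intro β h hmem
        exact ht ⟨_, Set.mem_insert_iff.mpr (Or.inr ⟨⟨β, h⟩, rfl⟩), hmem⟩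
      -- choose z
      set B : Set (Set (ℕ → ZMod 2)) :=
        insert ((g α + ({t} : Set (ℕ → ZMod 2))) ∩ F ⁻¹' {e α})
          (Set.range (fun β : ↥(Set.Iio α) =>
            (g β.1 + ({(q β.1 β.2).1} : Set (ℕ → ZMod 2))) ∩ F ⁻¹' {e α})) with hB
      have hBJ : B ⊆ J (e α) := by
        rintro S hS
        rcases Set.mem_insert_iff.mp hS with rfl | ⟨β, rfl⟩
        · exact htGood (e α)
        · exact (hq β.1 β.2).1 (e α)
      have hBcard : Cardinal.mk B < Cardinal.continuum := by
        refine lt_of_le_of_lt Cardinal.mk_insert_le ?_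
        refine Cardinal.add_lt_of_lt Cardinal.aleph0_le_continuum ?_ ?_
        · exact lt_of_le_of_lt Cardinal.mk_range_le (Cardinal.mk_Iio_ord_toType α)
        · exact Cardinal.one_lt_aleph0.trans_le Cardinal.aleph0_le_continuum
      obtain ⟨z, hzfib, hznot⟩ := Set.not_subset.mp (hJcov (e α) B hBJ hBcard)
      refine ⟨(t, z), htGood, ht2, hzfib, ?_, ?_⟩
      · intro hmem
        exact hznot ⟨_, Set.mem_insert _ _, hmem, hzfib⟩
      · intro β h hmem
        exact hznot ⟨_, Set.mem_insert_iff.mpr (Or.inr ⟨⟨β, h⟩, rfl⟩), hmem, hzfib⟩)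
  refine ⟨Set.range (fun α => (f α).2), ?_, ?_⟩
  · -- strongly meager
    intro H hH heq
    have hG0 : μ (toMeasurable μ H) = 0 := by
      rw [measure_toMeasurable]; exact hH
    obtain ⟨α, hα⟩ := hgsurj (toMeasurable μ H) (measurableSet_toMeasurable μ H) hG0
    have hmem : (f α).1 ∈ Set.range (fun α => (f α).2) + H := by
      rw [heq]; trivial
    rw [Set.mem_add] at hmem
    obtain ⟨a, ⟨β, rfl⟩, h, hh, hsum⟩ := hmem
    -- (f α).1 ∈ g α + {(f β).2}
    have hmem2 : (f α).1 ∈ g α + ({(f β).2} : Set (ℕ → ZMod 2)) := by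
      rw [stmt12_memadd, hα]
      apply subset_toMeasurable
      have : (f α).1 + (f β).2 = h := by
        rw [← hsum, add_comm ((fun α => (f α).2) β) h, stmt12_cancel]
      rwa [this]
    rcases lt_trichotomy β α with hlt | hlt | hlt
    · exact (hf α).2.1 β hlt hmem2
    · subst hlt
      exact (hf β).2.2.2.1 ((stmt12_memswap _ _ _).mp hmem2)
    · exact (hf β).2.2.2.2 α hlt ((stmt12_memswap _ _ _).mp hmem2)
  · -- F '' X = univ
    apply Set.eq_univ_of_forall
    intro x
    obtain ⟨α, hα⟩ := he x
    exact ⟨(f α).2, ⟨α, rfl⟩, (hf α).2.2.1.trans hα⟩
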